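/- arXiv:0712.0840 — 3 statements merged into one kernel-verified Lean document; each statement's English description precedes it below -/
import Mathlib

section
/- Every countable concept class over a countable instance space is finitely linearly separable. Precisely: let X be a countable instance space, let C be a countable collection of subsets of X, and suppose there are size functions |·| : X → ℕ and ‖·‖ : C → ℕ each with finite level sets (for every n ∈ ℕ, only finitely many elements of X have size n, and only finitely many concepts in C have size n). Then there exists a map φ from X into finitely supported {0,1}-valued vectors (indexed by the countable set X ⊕ C) such that for every concept c ∈ C there exists a finitely supported real weight vector w (indexed by X ⊕ C) with: for all x ∈ X, ⟨w, φ(x)⟩ > 0 if and only if x ∈ c. -/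
open scoped Classical

/-- **Every countable concept class is finitely linearly separable.**
`X` is a countable instance space, `C` a countable concept class (each `c : C`
denoting the subset `mem c ⊆ X`), with size functions `sizeX`, `sizeC` having
finite level sets.  Then there is a single embedding `φ` of `X` into finitely
supported `{0,1}`-valued vectors indexed by `X ⊕ C` such that every concept is
linearly separable: for each `c` there is a finitely supported weight vector
`w` with `⟨w, φ x⟩ > 0 ↔ x ∈ c`. -/
theorem stmt_0 {X C : Type*} [Countable X] [Countable C]
    (mem : C → Set X)
    (sizeX : X → ℕ) (sizeC : C → ℕ)
    (hX : ∀ n : ℕ, {x : X | sizeX x = n}.Finite)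
    (hC : ∀ n : ℕ, {c : C | sizeC c = n}.Finite) :
    ∃ φ : X → (X ⊕ C) → ℝ,
      (∀ x i, φ x i = 0 ∨ φ x i = 1) ∧
      (∀ x, (Function.support (φ x)).Finite) ∧
      ∀ c : C, ∃ w : (X ⊕ C) → ℝ,
        (Function.support w).Finite ∧
        ∀ x : X, (0 < ∑ᶠ i, w i * φ x i ↔ x ∈ mem c) := by
  have hfinC : ∀ m : ℕ, {c' : C | sizeC c' ≤ m}.Finite := by
    intro m
    have : {c' : C | sizeC c' ≤ m} = ⋃ n ∈ Set.Iic m, {c' | sizeC c' = n} := by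
      ext c; simp
    rw [this]
    exact Set.Finite.biUnion (Set.finite_Iic m) (fun n _ => hC n)
  have hfinX : ∀ m : ℕ, {x : X | sizeX x ≤ m}.Finite := by
    intro m
    have : {x : X | sizeX x ≤ m} = ⋃ n ∈ Set.Iic m, {x | sizeX x = n} := by
      ext x; simp
    rw [this]
    exact Set.Finite.biUnion (Set.finite_Iic m) (fun n _ => hX n)
  refine ⟨fun x i => Sum.casesOn i
      (fun x' => if x' = x then (1 : ℝ) else 0)
      (fun c' => if x ∈ mem c' ∧ sizeC c' ≤ sizeX x then (1 : ℝ) else 0),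
    ?_, ?_, ?_⟩
  · intro x i
    cases i <;> dsimp <;> split <;> simp
  · intro x
    apply Set.Finite.subset
      (((Set.finite_singleton x).image Sum.inl).union
        ((hfinC (sizeX x)).image Sum.inr))
    intro i hi
    cases i with
    | inl x' =>
      left
      simp only [Function.mem_support] at hi
      have : x' = x := by by_contra h; simp [h] at hi
      simp [this]
    | inr c' =>
      right
      simp only [Function.mem_support] at hi
      have : x ∈ mem c' ∧ sizeC c' ≤ sizeX x := by
        by_contra h; simp [h] at hi
      exact ⟨c', this.2, rfl⟩
  · intro c
    refine ⟨fun i => Sum.casesOn i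
        (fun x' => if x' ∈ mem c ∧ sizeX x' < sizeC c then (1 : ℝ) else 0)
        (fun c' => if c' = c then (1 : ℝ) else 0), ?_, ?_⟩
    · apply Set.Finite.subset
        (((hfinX (sizeC c)).image Sum.inl).union
          ((Set.finite_singleton c).image Sum.inr))
      intro i hi
      cases i with
      | inl x' =>
        left
        simp only [Function.mem_support] at hi
        have : x' ∈ mem c ∧ sizeX x' < sizeC c := by
          by_contra h; simp [h] at hi
        exact ⟨x', le_of_lt this.2, rfl⟩
      | inr c' =>
        right
        have : c' = c := by by_contra h; simp [h] at hi
        simp [this]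
    · intro x
      have hsub : Function.support
          (fun i : X ⊕ C => (Sum.casesOn i
            (fun x' => if x' ∈ mem c ∧ sizeX x' < sizeC c then (1 : ℝ) else 0)
            (fun c' => if c' = c then (1 : ℝ) else 0) : ℝ) *
            (Sum.casesOn i
            (fun x' => if x' = x then (1 : ℝ) else 0)
            (fun c' => if x ∈ mem c' ∧ sizeC c' ≤ sizeX x then (1 : ℝ) else 0) : ℝ))
          ⊆ ↑({Sum.inl x, Sum.inr c} : Finset (X ⊕ C)) := by
        intro i hi
        simp only [Function.mem_support] at hi
        cases i with
        | inl x' =>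
          have : x' = x := by by_contra h; simp [h] at hi
          simp [this]
        | inr c' =>
          have : c' = c := by by_contra h; simp [h] at hi
          simp [this]
      rw [finsum_eq_finset_sum_of_support_subset _ hsub]
      rw [Finset.sum_pair (by simp)]
      dsimp only
      by_cases hx : x ∈ mem c
      · rcases le_or_gt (sizeC c) (sizeX x) with h | h
        · simp [hx, h, not_lt.mpr h]
        · simp [hx, h, not_le.mpr h]
      · simp [hx]
end

section
/- Let X be a countable instance space with size function |·| : X → ℕ, let C be a countable concept class over X with size function ‖·‖ : C → ℕ, and fix a target concept ĉ ∈ C. Define the canonical embedding φ : X → {0,1}^(X ⊕ C) as the direct sum φ(x) = χ(x) ⊕ α(x) of the embedding by instance [χ(x)]_u = 1[x = u] and the embedding by concept [α(x)]_c = 1[x ∈ c]·1[‖c‖ ≤ |x|], and define the weight vector w = w^χ ⊕ w^α, where [w^χ]_u = 1[u ∈ ĉ]·1[|u| < ‖ĉ‖] and [w^α]_c = 1[c = ĉ]. Then both w and every φ(x) have finite support, and for every x ∈ X, ⟨w, φ(x)⟩ = 1[x ∈ ĉ]; in particular ⟨w, φ(x)⟩ > 0 if and only if x ∈ ĉ.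 -/
open scoped Classical

/-- **The canonical embedding separates the target concept.**
With `φ(x) = χ(x) ⊕ α(x)` and `w = w^χ ⊕ w^α` (given here by defining
equations), both `w` and every `φ(x)` have finite support, and
`⟨w, φ(x)⟩ = 1[x ∈ ĉ]`; in particular `⟨w, φ(x)⟩ > 0 ↔ x ∈ ĉ`. -/
theorem stmt_4 {X C : Type*} [Countable X] [Countable C]
    (mem : C → Set X)
    (sizeX : X → ℕ) (sizeC : C → ℕ)
    (hX : ∀ n : ℕ, {x : X | sizeX x = n}.Finite)
    (hC : ∀ n : ℕ, {c : C | sizeC c = n}.Finite)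
    (chat : C)
    (φ : X → (X ⊕ C) → ℝ)
    (hφ : ∀ x : X, φ x =
      Sum.elim
        (fun u : X => if x = u then (1 : ℝ) else 0)
        (fun c : C =>
          (if x ∈ mem c then (1 : ℝ) else 0) *
            (if sizeC c ≤ sizeX x then (1 : ℝ) else 0)))
    (w : (X ⊕ C) → ℝ)
    (hw : w =
      Sum.elim
        (fun u : X =>
          (if u ∈ mem chat then (1 : ℝ) else 0) *
            (if sizeX u < sizeC chat then (1 : ℝ) else 0))
        (fun c : C => if c = chat then (1 : ℝ) else 0)) :
    (Function.support w).Finite ∧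
    (∀ x : X, (Function.support (φ x)).Finite) ∧
    (∀ x : X, (∑ᶠ i, w i * φ x i) = if x ∈ mem chat then (1 : ℝ) else 0) ∧
    (∀ x : X, (0 < ∑ᶠ i, w i * φ x i ↔ x ∈ mem chat)) := by

  have hfinlt : ∀ N : ℕ, {u : X | sizeX u < N}.Finite := fun N =>
    ((Set.finite_Iio N).biUnion (fun n _ => hX n)).subset
      (fun u hu => Set.mem_biUnion hu rfl)
  have hfinle : ∀ N : ℕ, {c : C | sizeC c ≤ N}.Finite := fun N =>
    ((Set.finite_Iic N).biUnion (fun n _ => hC n)).subset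
      (fun c hc => Set.mem_biUnion hc rfl)
  have hwfin : (Function.support w).Finite := by
    apply Set.Finite.subset
      (((hfinlt (sizeC chat)).image Sum.inl).union
        ((Set.finite_singleton chat).image Sum.inr))
    intro i hi
    rw [Function.mem_support, hw] at hi
    rcases i with u | c
    · left
      refine ⟨u, ?_, rfl⟩
      simp only [Sum.elim_inl] at hi
      by_contra h
      simp at h
      simp [h] at hi
    · right
      refine ⟨c, ?_, rfl⟩
      simp only [Sum.elim_inr] at hi
      by_contra h
      simp at h
      simp [h] at hi
  have hφfin : ∀ x : X, (Function.support (φ x)).Finite := by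
    intro x
    apply Set.Finite.subset
      (((Set.finite_singleton x).image Sum.inl).union
        ((hfinle (sizeX x)).image Sum.inr))
    intro i hi
    rw [Function.mem_support, hφ] at hi
    rcases i with u | c
    · left
      refine ⟨u, ?_, rfl⟩
      by_contra h
      simp [Ne.symm h] at hi
    · right
      refine ⟨c, ?_, rfl⟩
      simp only [Sum.elim_inr] at hi
      by_contra h
      simp at h
      simp [h] at hi
  have key : ∀ x : X, (∑ᶠ i, w i * φ x i) = if x ∈ mem chat then (1 : ℝ) else 0 := by
    intro x
    have hsupp : Function.support (fun i => w i * φ x i) ⊆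
        ↑({Sum.inl x, Sum.inr chat} : Finset (X ⊕ C)) := by
      intro i hi
      rw [Function.mem_support, hw, hφ] at hi
      rcases i with u | c
      · have : x = u := by
          by_contra h
          simp [h] at hi
        simp [this]
      · have : c = chat := by
          by_contra h
          simp [h] at hi
        simp [this]
    rw [finsum_eq_finset_sum_of_support_subset _ hsupp,
      Finset.sum_pair (by simp : (Sum.inl x : X ⊕ C) ≠ Sum.inr chat), hw, hφ]
    simp only [Sum.elim_inl, Sum.elim_inr, if_pos rfl]
    rcases lt_or_ge (sizeX x) (sizeC chat) with h | h <;>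
      by_cases hx : x ∈ mem chat
    · simp [hx, h, h.not_ge]
    · simp [hx, h, h.not_ge]
    · simp [hx, h.not_gt, h]
    · simp [hx, h.not_gt, h]
  refine ⟨hwfin, hφfin, key, fun x => ?_⟩
  rw [key x]
  by_cases hx : x ∈ mem chat <;> simp [hx]
end

section
/- Fix a finite nonempty alphabet Σ. Every regular language over Σ is finitely linearly separable under the canonical embedding built from the size functions given by string length on Σ* and by number of states on DFAs. Precisely: there is an embedding φ of Σ* into finitely supported {0,1}-valued vectors, indexed by the disjoint union of Σ* and the set of all finite deterministic automata over Σ (with state set Fin n for some n ≥ 1), defined by φ(x) = χ(x) ⊕ α(x) where [χ(x)]_u = 1[x = u] for u ∈ Σ* and [α(x)]_A = 1[x ∈ L(A)]·1[‖A‖ ≤ |x|] for DFAs A, such that for every DFA Â there exists a finitely supported real weight vector w with: for all x ∈ Σ*, ⟨w, φ(x)⟩ > 0 if and only if x ∈ L(Â). -/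
/-- A DFA on `n` states over the alphabet `σ`: a transition function, a start
state, and a set of accepting states. -/
structure DFAn (σ : Type) (n : ℕ) where
  step : Fin n → σ → Fin n
  start : Fin n
  accept : Finset (Fin n)

instance (σ : Type) [Fintype σ] [DecidableEq σ] (n : ℕ) : Fintype (DFAn σ n) :=
  Fintype.ofEquiv ((Fin n → σ → Fin n) × Fin n × Finset (Fin n))
    { toFun := fun p => ⟨p.1, p.2.1, p.2.2⟩
      invFun := fun A => ⟨A.step, A.start, A.accept⟩
      left_inv := fun _ => rfl
      right_inv := fun _ => rfl }

/-- `A` accepts the string `x` if the state reached from `start` by applying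
`step` along the letters of `x` is an accepting state. -/
def DFAn.Accepts {σ : Type} {n : ℕ} (A : DFAn σ n) (x : List σ) : Prop :=
  x.foldl A.step A.start ∈ A.accept

instance {σ : Type} {n : ℕ} (A : DFAn σ n) (x : List σ) : Decidable (A.Accepts x) :=
  inferInstanceAs (Decidable (_ ∈ _))

/-- `Kn σ n x y`: the number of `n`-state DFAs over `σ` accepting both `x` and `y`. -/
def Kn (σ : Type) [Fintype σ] [DecidableEq σ] (n : ℕ) (x y : List σ) : ℕ :=
  (Finset.univ.filter (fun A : DFAn σ n => A.Accepts x ∧ A.Accepts y)).card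

open scoped Classical

/-- The index set for the canonical embedding: the disjoint union of the set
of strings and the set of all DFAs over `σ` with state set `Fin n`, `n ≥ 1`. -/
abbrev RegIdx (σ : Type) : Type := List σ ⊕ (Σ n : ℕ, DFAn σ (n + 1))

/-- The canonical embedding `φ(x) = χ(x) ⊕ α(x)`:
`[χ(x)]_u = 1[x = u]` on string indices, and
`[α(x)]_A = 1[x ∈ L(A)]·1[‖A‖ ≤ |x|]` on DFA indices. -/
noncomputable def phi (σ : Type) (x : List σ) : RegIdx σ → ℝ :=
  Sum.elim (fun u : List σ => if x = u then (1 : ℝ) else 0)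
    (fun A : Σ n : ℕ, DFAn σ (n + 1) =>
      (if A.2.Accepts x then (1 : ℝ) else 0) *
        (if A.1 + 1 ≤ x.length then (1 : ℝ) else 0))

/-- The universal regular kernel `K(x,y) = ⟨φ(x), φ(y)⟩`. -/
noncomputable def Kuniv (σ : Type) (x y : List σ) : ℝ :=
  ∑ᶠ i : RegIdx σ, phi σ x i * phi σ y i

/-- **Every regular language is finitely linearly separable under the
canonical embedding.**  `φ` takes `{0,1}` values with finite support, and for
every DFA `Â` there is a finitely supported weight vector `w` such that
`⟨w, φ(x)⟩ > 0 ↔ x ∈ L(Â)`. -/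
theorem stmt_5 {σ : Type} [Fintype σ] [DecidableEq σ] [Nonempty σ] :
    (∀ (x : List σ) (i : RegIdx σ), phi σ x i = 0 ∨ phi σ x i = 1) ∧
    (∀ x : List σ, (Function.support (phi σ x)).Finite) ∧
    ∀ Ahat : Σ n : ℕ, DFAn σ (n + 1), ∃ w : RegIdx σ → ℝ,
      (Function.support w).Finite ∧
      ∀ x : List σ, (0 < ∑ᶠ i : RegIdx σ, w i * phi σ x i ↔ Ahat.2.Accepts x) := by
    classical
  refine ⟨?_, ?_, ?_⟩
  · intro x i
    cases i with
    | inl u => by_cases h : x = u <;> simp [phi, h]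
    | inr A =>
      simp only [phi, Sum.elim_inr]
      split_ifs <;> simp
  · intro x
    have hfin : ({A : Σ n : ℕ, DFAn σ (n + 1) | A.1 < x.length}).Finite := by
      apply Set.Finite.subset (Finset.finite_toSet
        ((Finset.range x.length).sigma fun n => (Finset.univ : Finset (DFAn σ (n + 1)))))
      rintro ⟨n, A⟩ hA
      simp only [Set.mem_setOf_eq] at hA
      simp [Finset.mem_sigma, Finset.mem_range, hA]
    apply Set.Finite.subset ((Set.finite_singleton (Sum.inl x : RegIdx σ)).union
      (hfin.image Sum.inr))
    intro i hi
    cases i with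
    | inl u =>
      left
      simp only [Function.mem_support, phi, Sum.elim_inl, ne_eq, ite_eq_right_iff,
        one_ne_zero, imp_false, not_not] at hi
      simp [hi]
    | inr A =>
      right
      simp only [Function.mem_support, phi, Sum.elim_inr, ne_eq, mul_eq_zero,
        ite_eq_right_iff, one_ne_zero, imp_false, not_or, not_not] at hi
      exact ⟨A, hi.2, rfl⟩
  · intro Ahat
    refine ⟨Sum.elim (fun u => if Ahat.2.Accepts u ∧ u.length ≤ Ahat.1 then (1 : ℝ) else 0)
      (fun A => if A = Ahat then (1 : ℝ) else 0), ?_, ?_⟩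
    · apply Set.Finite.subset (((List.finite_length_le σ Ahat.1).image Sum.inl).union
        (Set.finite_singleton (Sum.inr Ahat : RegIdx σ)))
      intro i hi
      cases i with
      | inl u =>
        left
        simp only [Function.mem_support, Sum.elim_inl, ne_eq, ite_eq_right_iff,
          one_ne_zero, imp_false, not_not] at hi
        exact ⟨u, hi.2, rfl⟩
      | inr A =>
        right
        simp only [Function.mem_support, Sum.elim_inr, ne_eq, ite_eq_right_iff,
          one_ne_zero, imp_false, not_not] at hi
        simp [hi]
    · intro x
      set w : RegIdx σ → ℝ := Sum.elim
        (fun u => if Ahat.2.Accepts u ∧ u.length ≤ Ahat.1 then (1 : ℝ) else 0)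
        (fun A => if A = Ahat then (1 : ℝ) else 0) with hw
      have hsub : Function.support (fun i => w i * phi σ x i) ⊆
          ({Sum.inl x, Sum.inr Ahat} : Finset (RegIdx σ)) := by
        intro i hi
        simp only [Function.mem_support, ne_eq, mul_eq_zero, not_or] at hi
        cases i with
        | inl u =>
          have : x = u := by
            by_contra h
            exact hi.2 (by simp [phi, h])
          simp [this]
        | inr A =>
          have : A = Ahat := by
            by_contra h
            exact hi.1 (by simp [hw, h])
          simp [this]
      rw [finsum_eq_finset_sum_of_support_subset _ hsub]
      have hne : (Sum.inl x : RegIdx σ) ≠ Sum.inr Ahat := by simp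
      rw [Finset.sum_pair hne]
      simp only [hw, Sum.elim_inl, Sum.elim_inr, phi, if_pos rfl]
      by_cases ha : Ahat.2.Accepts x
      · by_cases hl : x.length ≤ Ahat.1
        · have : ¬ (Ahat.1 + 1 ≤ x.length) := by omega
          simp [ha, hl, this]
        · have : Ahat.1 + 1 ≤ x.length := by omega
          simp [ha, hl, this]
      · simp [ha]
end
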